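/- Let q ≥ 2 be odd, let (P, L) be a finite projective plane of order q, let t ≥ 1, and let B₁, …, B_t be projective bundles in it that are pairwise disjoint (no common oval). Let A be the P × L incidence matrix over F₂ and Mᵢ the P × Bᵢ incidence matrix over F₂. Then the F₂-rank of the block matrix H = (A | M₁ | ⋯ | M_t) equals q²+q; equivalently, its right kernel has F₂-dimension t(q²+q+1) + 1. -/

import Mathlib

/-- A finite projective plane of order `q`, given by its set of lines (each line a
finite set of points of the ambient point type `P`): any two distinct points lie on
exactly one common line, any two distinct lines meet in exactly one point, there are
four points no three of which are collinear, and every line has `q + 1` points. -/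
structure IsProjectivePlane (q : ℕ) {P : Type} [DecidableEq P] (L : Finset (Finset P)) : Prop where
  exists_unique_line : ∀ p₁ p₂ : P, p₁ ≠ p₂ → ∃! ℓ, ℓ ∈ L ∧ p₁ ∈ ℓ ∧ p₂ ∈ ℓ
  exists_unique_point : ∀ ℓ₁ ∈ L, ∀ ℓ₂ ∈ L, ℓ₁ ≠ ℓ₂ → ∃! p, p ∈ ℓ₁ ∧ p ∈ ℓ₂
  nondeg : ∃ a b c d : P, a ≠ b ∧ a ≠ c ∧ a ≠ d ∧ b ≠ c ∧ b ≠ d ∧ c ≠ d ∧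
      ∀ ℓ ∈ L, (ℓ ∩ ({a, b, c, d} : Finset P)).card ≤ 2
  card_line : ∀ ℓ ∈ L, ℓ.card = q + 1

/-- An oval: a set of `q + 1` points such that every line contains at most two of them. -/
def IsOval (q : ℕ) {P : Type} [DecidableEq P] (L : Finset (Finset P)) (O : Finset P) : Prop :=
  O.card = q + 1 ∧ ∀ ℓ ∈ L, (ℓ ∩ O).card ≤ 2

/-- A projective bundle: a set of `q² + q + 1` ovals, any two of which meet in
exactly one point. -/
def IsProjectiveBundle (q : ℕ) {P : Type} [DecidableEq P] (L : Finset (Finset P))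
    (B : Finset (Finset P)) : Prop :=
  B.card = q ^ 2 + q + 1 ∧ (∀ o ∈ B, IsOval q L o) ∧
    ∀ o₁ ∈ B, ∀ o₂ ∈ B, o₁ ≠ o₂ → (o₁ ∩ o₂).card = 1

/-!
Over `𝔽₂` and for odd `q`, the point–line incidence matrix `A` of the plane satisfies
`A Aᵀ = I + J`: a point lies on `q + 1` lines and two points on exactly one. Since `J` has rank
one, `rank H ≥ rank A ≥ rank (I + J) ≥ |P| - 1 = q² + q`. Conversely every column of `H`, a line
or an oval, has `q + 1` points, an even number, so the all-ones vector is a nonzero left null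
vector of `H` and `rank H < |P|`. The kernel dimension then follows from rank–nullity.
-/

open Finset Matrix Configuration

namespace Matrix

variable {m n K : Type*} [Field K] [Fintype n]

theorem rank_add_le (A B : Matrix m n K) : (A + B).rank ≤ A.rank + B.rank := by
  rw [rank, rank, rank, mulVecLin_add]
  exact (Submodule.finrank_mono (LinearMap.range_add_le _ _)).trans
    (Submodule.finrank_add_le_finrank_add_finrank _ _)

theorem rank_le_rank_add_vecMulVec_add_one (A : Matrix m n K) (u : m → K) (v : n → K) :
    A.rank ≤ (A + vecMulVec u v).rank + 1 := by
  have hA : A + vecMulVec u v + vecMulVec (-u) v = A := by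
    rw [neg_vecMulVec, add_neg_cancel_right]
  have hsub := Matrix.rank_add_le (A + vecMulVec u v) (vecMulVec (-u) v)
  rw [hA] at hsub
  have := rank_vecMulVec_le (-u) v
  omega

theorem rank_lt_card_of_vecMul_eq_zero [Fintype m] {A : Matrix m n K} {v : m → K} (hv : v ≠ 0)
    (hA : v ᵥ* A = 0) : A.rank < Fintype.card m := by
  have hker : LinearMap.ker Aᵀ.mulVecLin ≠ ⊥ := by
    rw [Submodule.ne_bot_iff]
    exact ⟨v, by simpa [mulVec_transpose] using hA, hv⟩
  have hnullity := Submodule.finrank_eq_zero.not.mpr hker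
  have hrank_nullity := LinearMap.finrank_range_add_finrank_ker Aᵀ.mulVecLin
  rw [Module.finrank_fintype_fun_eq_card] at hrank_nullity
  change Aᵀ.rank + _ = _ at hrank_nullity
  rw [← rank_transpose]
  omega

end Matrix

section IncidenceMatrix

variable {P ι : Type*} [DecidableEq P]

def incidenceMatrix (R : Type*) [Zero R] [One R] (S : ι → Finset P) : Matrix P ι R :=
  of fun p i => if p ∈ S i then 1 else 0

variable {R : Type*} (S : ι → Finset P)

theorem incidenceMatrix_mul_transpose_apply [NonAssocSemiring R] [Fintype ι] (p p' : P) :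
    (incidenceMatrix R S * (incidenceMatrix R S)ᵀ) p p' = #{i | p ∈ S i ∧ p' ∈ S i} := by
  simp only [mul_apply, transpose_apply, incidenceMatrix, of_apply, mul_ite, mul_one, mul_zero,
    ← ite_and, sum_boole, and_comm]

theorem one_vecMul_incidenceMatrix [NonAssocSemiring R] [Fintype P] :
    1 ᵥ* incidenceMatrix R S = fun i => (#(S i) : R) := by
  ext i
  simp [vecMul, dotProduct, incidenceMatrix]

theorem rank_incidenceMatrix_lt_card {K : Type*} [Field K] [Fintype P] [Nonempty P] [Fintype ι]
    (hS : ∀ i, (#(S i) : K) = 0) :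
    (incidenceMatrix K S).rank < Fintype.card P :=
  rank_lt_card_of_vecMul_eq_zero one_ne_zero (by rw [one_vecMul_incidenceMatrix]; exact funext hS)

end IncidenceMatrix

theorem Finset.notMem_of_card_inter_le_two {P : Type*} [DecidableEq P] {ℓ Q : Finset P}
    (h : #(ℓ ∩ Q) ≤ 2) {x y z : P} (hx : x ∈ Q) (hy : y ∈ Q) (hz : z ∈ Q)
    (hxy : x ≠ y) (hxz : x ≠ z) (hyz : y ≠ z)
    (hxℓ : x ∈ ℓ) (hyℓ : y ∈ ℓ) : z ∉ ℓ := by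
  intro hzℓ
  have : #{x, y, z} ≤ #(ℓ ∩ Q) := card_le_card (by simp [insert_subset_iff, *])
  rw [card_eq_three.mpr ⟨x, y, z, hxy, hxz, hyz, rfl⟩] at this
  omega

/-- Makes the elements of `L` the lines of a `Configuration` on `P`, incidence being membership. -/
instance {P : Type*} (L : Finset (Finset P)) : Membership P {m // m ∈ L} := ⟨fun ℓ p => p ∈ ℓ.1⟩

namespace IsProjectivePlane

variable {q : ℕ} {P : Type} [DecidableEq P] {L : Finset (Finset P)} (hL : IsProjectivePlane q L)
include hL

theorem nondegenerate : Nondegenerate P {m // m ∈ L} := by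
  obtain ⟨a, b, c, d, hab, hac, had, hbc, hbd, hcd, hquad⟩ := hL.nondeg
  have off := fun ℓ : {m // m ∈ L} => @notMem_of_card_inter_le_two P _ ℓ.1 _ (hquad ℓ.1 ℓ.2)
  refine ⟨fun ℓ => ?_, fun p => ?_, fun {p₁ p₂ ℓ₁ ℓ₂} h₁ h₂ h₃ h₄ => ?_⟩
  · by_cases ha : a ∈ ℓ.1
    · by_cases hb : b ∈ ℓ.1
      · exact ⟨c, off ℓ (by simp) (by simp) (by simp) hab hac hbc ha hb⟩
      · exact ⟨b, hb⟩
    · exact ⟨a, ha⟩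
  · -- With `x ≠ p` and `x, y, z` not collinear, the lines `xy` and `xz` cannot both pass through `p`.
    obtain ⟨x, y, z, hx, hy, hz, hxy, hxz, hyz, hxp⟩ : ∃ x y z, x ∈ ({a, b, c, d} : Finset P) ∧
        y ∈ ({a, b, c, d} : Finset P) ∧ z ∈ ({a, b, c, d} : Finset P) ∧
        x ≠ y ∧ x ≠ z ∧ y ≠ z ∧ x ≠ p := by
      by_cases hap : a = p
      · exact ⟨b, c, d, by simp, by simp, by simp, hbc, hbd, hcd, hap ▸ hab.symm⟩
      · exact ⟨a, b, c, by simp, by simp, by simp, hab, hac, hbc, hap⟩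
    obtain ⟨ℓ₁, ⟨hℓ₁, hxℓ₁, hyℓ₁⟩, -⟩ := hL.exists_unique_line x y hxy
    obtain ⟨ℓ₂, ⟨hℓ₂, hxℓ₂, hzℓ₂⟩, -⟩ := hL.exists_unique_line x z hxz
    by_contra! hp
    have h₁₂ : ℓ₁ = ℓ₂ := (hL.exists_unique_line x p hxp).unique
      ⟨hℓ₁, hxℓ₁, hp ⟨ℓ₁, hℓ₁⟩⟩ ⟨hℓ₂, hxℓ₂, hp ⟨ℓ₂, hℓ₂⟩⟩
    exact off ⟨ℓ₁, hℓ₁⟩ hx hy hz hxy hxz hyz hxℓ₁ hyℓ₁ (h₁₂ ▸ hzℓ₂)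
  · by_cases hp : p₁ = p₂
    · exact Or.inl hp
    · exact Or.inr (Subtype.ext ((hL.exists_unique_line p₁ p₂ hp).unique
        ⟨ℓ₁.2, h₁, h₂⟩ ⟨ℓ₂.2, h₃, h₄⟩))

theorem exists_config : ∃ (p₁ p₂ p₃ : P) (ℓ₁ ℓ₂ ℓ₃ : {m // m ∈ L}),
    p₁ ∉ ℓ₂ ∧ p₁ ∉ ℓ₃ ∧ p₂ ∉ ℓ₁ ∧ p₂ ∈ ℓ₂ ∧ p₂ ∈ ℓ₃ ∧ p₃ ∉ ℓ₁ ∧ p₃ ∈ ℓ₂ ∧ p₃ ∉ ℓ₃ := by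
  obtain ⟨a, b, c, d, hab, hac, had, hbc, hbd, hcd, hquad⟩ := hL.nondeg
  have off := fun ℓ : {m // m ∈ L} => @notMem_of_card_inter_le_two P _ ℓ.1 _ (hquad ℓ.1 ℓ.2)
  obtain ⟨ad, ⟨had', ha, hd⟩, -⟩ := hL.exists_unique_line a d had
  obtain ⟨bc, ⟨hbc', hb, hc⟩, -⟩ := hL.exists_unique_line b c hbc
  obtain ⟨bd, ⟨hbd', hb', hd'⟩, -⟩ := hL.exists_unique_line b d hbd
  refine ⟨a, b, c, ⟨ad, had'⟩, ⟨bc, hbc'⟩, ⟨bd, hbd'⟩, ?_, ?_, ?_, hb, hb', ?_, hc, ?_⟩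
  · exact off ⟨bc, hbc'⟩ (by simp) (by simp) (by simp) hbc hab.symm hac.symm hb hc
  · exact off ⟨bd, hbd'⟩ (by simp) (by simp) (by simp) hbd hab.symm had.symm hb' hd'
  · exact off ⟨ad, had'⟩ (by simp) (by simp) (by simp) had hab hbd.symm ha hd
  · exact off ⟨ad, had'⟩ (by simp) (by simp) (by simp) had hac hcd.symm ha hd
  · exact off ⟨bd, hbd'⟩ (by simp) (by simp) (by simp) hbd hbc hcd.symm hb' hd'

theorem nonempty_projectivePlane : Nonempty (ProjectivePlane P {m // m ∈ L}) := ⟨{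
  __ := hL.nondegenerate
  mkPoint {ℓ₁ ℓ₂} h := (hL.exists_unique_point ℓ₁.1 ℓ₁.2 ℓ₂.1 ℓ₂.2 (h ∘ Subtype.ext)).exists.choose
  mkPoint_ax {ℓ₁ ℓ₂} h :=
    (hL.exists_unique_point ℓ₁.1 ℓ₁.2 ℓ₂.1 ℓ₂.2 (h ∘ Subtype.ext)).exists.choose_spec
  mkLine {p₁ p₂} h := ⟨_, (hL.exists_unique_line p₁ p₂ h).exists.choose_spec.1⟩
  mkLine_ax {p₁ p₂} h := (hL.exists_unique_line p₁ p₂ h).exists.choose_spec.2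
  exists_config := hL.exists_config }⟩

theorem order_eq [Finite P] [ProjectivePlane P {m // m ∈ L}] :
    ProjectivePlane.order P {m // m ∈ L} = q := by
  obtain ⟨a, b, -, -, hab, -⟩ := hL.nondeg
  obtain ⟨ℓ, ⟨hℓ, -, -⟩, -⟩ := hL.exists_unique_line a b hab
  have h := ProjectivePlane.pointCount_eq P (⟨ℓ, hℓ⟩ : {m // m ∈ L})
  rw [pointCount, show Nat.card {p // p ∈ (⟨ℓ, hℓ⟩ : {m // m ∈ L})} = #ℓ from
    Nat.card_eq_finsetCard ℓ, hL.card_line ℓ hℓ] at h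
  omega

theorem card_points [Fintype P] : Fintype.card P = q ^ 2 + q + 1 := by
  obtain ⟨_⟩ := hL.nonempty_projectivePlane
  rw [ProjectivePlane.card_points P {m // m ∈ L}, hL.order_eq]

theorem card_lines [Fintype P] : #L = q ^ 2 + q + 1 := by
  obtain ⟨_⟩ := hL.nonempty_projectivePlane
  rw [← Fintype.card_coe, ProjectivePlane.card_lines P {m // m ∈ L}, hL.order_eq]

theorem card_lines_through [Fintype P] (p : P) : #{ℓ : {m // m ∈ L} | p ∈ ℓ.1} = q + 1 := by
  obtain ⟨_⟩ := hL.nonempty_projectivePlane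
  rw [← hL.order_eq, ← ProjectivePlane.lineCount_eq {m // m ∈ L} p, ← Fintype.card_subtype]
  exact (Nat.card_eq_fintype_card (α := {ℓ : {m // m ∈ L} // p ∈ ℓ.1})).symm

theorem card_lines_through_pair {p p' : P} (h : p ≠ p') :
    #{ℓ : {m // m ∈ L} | p ∈ ℓ.1 ∧ p' ∈ ℓ.1} = 1 := by
  obtain ⟨ℓ, ⟨hℓ, hp, hp'⟩, huniq⟩ := hL.exists_unique_line p p' h
  rw [card_eq_one]
  refine ⟨⟨ℓ, hℓ⟩, ?_⟩
  ext m
  simp only [mem_filter, mem_univ, true_and, mem_singleton]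
  exact ⟨fun hm => Subtype.ext (huniq m.1 ⟨m.2, hm⟩), fun hm => hm ▸ ⟨hp, hp'⟩⟩

theorem incidenceMatrix_mul_transpose [Fintype P] (R : Type*) [NonAssocSemiring R] :
    incidenceMatrix R ((↑) : L → Finset P) * (incidenceMatrix R ((↑) : L → Finset P))ᵀ =
      (q : R) • 1 + vecMulVec 1 1 := by
  ext p p'
  rw [incidenceMatrix_mul_transpose_apply]
  by_cases h : p = p'
  · subst h
    simp only [and_self]
    rw [hL.card_lines_through]
    simp
  · rw [hL.card_lines_through_pair h]
    simp [one_apply_ne h]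

theorem le_rank_incidenceMatrix [Fintype P] {K : Type*} [Field K] (hq : (q : K) ≠ 0) :
    q ^ 2 + q ≤ (incidenceMatrix K ((↑) : L → Finset P)).rank := by
  set A := incidenceMatrix K ((↑) : L → Finset P)
  suffices q ^ 2 + q + 1 ≤ A.rank + 1 by omega
  calc q ^ 2 + q + 1 = ((q : K) • (1 : Matrix P P K)).rank := by
        rw [rank_smul_of_mem_nonZeroDivisors _ (mem_nonZeroDivisors_of_ne_zero hq), rank_one,
          hL.card_points]
    _ ≤ ((q : K) • (1 : Matrix P P K) + vecMulVec 1 1).rank + 1 :=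
        rank_le_rank_add_vecMulVec_add_one _ 1 1
    _ = (A * Aᵀ).rank + 1 := by rw [hL.incidenceMatrix_mul_transpose]
    _ ≤ A.rank + 1 := Nat.add_le_add_right (rank_mul_le_left A Aᵀ) 1

end IsProjectivePlane

theorem statement_18_general (q : ℕ) (hodd : Odd q) (P : Type) [Fintype P] [DecidableEq P]
    (L : Finset (Finset P)) (hL : IsProjectivePlane q L)
    (t : ℕ) (B : Fin t → Finset (Finset P))
    (hB : ∀ i, IsProjectiveBundle q L (B i)) :
    let H : Matrix P ({m // m ∈ L} ⊕ ((i : Fin t) × {o // o ∈ B i})) (ZMod 2) :=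
      Matrix.of fun p c =>
        Sum.elim (fun m : {m // m ∈ L} => if p ∈ m.1 then (1 : ZMod 2) else 0)
          (fun io : (i : Fin t) × {o // o ∈ B i} => if p ∈ io.2.1 then 1 else 0) c
    H.rank = q ^ 2 + q ∧
    Module.finrank (ZMod 2) ↥(LinearMap.ker H.mulVecLin) = t * (q ^ 2 + q + 1) + 1 := by
  intro H
  set S : {m // m ∈ L} ⊕ ((i : Fin t) × {o // o ∈ B i}) → Finset P :=
    Sum.elim (↑) fun io => io.2.1
  have hH : H = incidenceMatrix (ZMod 2) S := by ext p (_ | _) <;> rfl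
  have hcard_col : ∀ c, #(S c) = q + 1 := by
    rintro (ℓ | ⟨i, o⟩)
    exacts [hL.card_line ℓ.1 ℓ.2, ((hB i).2.1 o.1 o.2).1]
  have hcardP := hL.card_points
  have hrank : H.rank = q ^ 2 + q := by
    have : Nonempty P := Fintype.card_pos_iff.mp (by omega)
    refine le_antisymm ?_ ?_
    · have := rank_incidenceMatrix_lt_card (K := ZMod 2) (S := S) fun c => by
        rw [hcard_col, ZMod.natCast_eq_zero_iff_even]
        exact hodd.add_one
      rw [hH]
      omega
    · calc q ^ 2 + q ≤ (incidenceMatrix (ZMod 2) ((↑) : L → Finset P)).rank :=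
            hL.le_rank_incidenceMatrix (by rw [hodd.natCast_zmod_two]; exact one_ne_zero)
        _ = (H.submatrix id Sum.inl).rank := by rw [hH]; rfl
        _ ≤ H.rank := rank_submatrix_le _ _ _
  refine ⟨hrank, ?_⟩
  have hcard_cols : Fintype.card ({m // m ∈ L} ⊕ ((i : Fin t) × {o // o ∈ B i})) =
      (q ^ 2 + q + 1) + t * (q ^ 2 + q + 1) := by
    simp [Fintype.card_sigma, (hB _).1, hL.card_lines]
  have hrank_nullity := LinearMap.finrank_range_add_finrank_ker H.mulVecLin
  rw [Module.finrank_fintype_fun_eq_card, hcard_cols] at hrank_nullity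
  change H.rank + _ = _ at hrank_nullity
  omega

/-- For `q ≥ 2` odd, `t ≥ 1` pairwise disjoint projective bundles
`B₁, …, B_t` in a finite projective plane of order `q` with line set `L`, the `F₂`-rank of
the concatenated incidence matrix `H = (A | M₁ | ⋯ | M_t)` equals `q² + q`; equivalently
its right kernel has `F₂`-dimension `t(q² + q + 1) + 1`. -/
theorem statement_18 (q : ℕ) (hq : 2 ≤ q) (hodd : Odd q) (P : Type) [Fintype P] [DecidableEq P]
    (L : Finset (Finset P)) (hL : IsProjectivePlane q L)
    (t : ℕ) (ht : 1 ≤ t) (B : Fin t → Finset (Finset P))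
    (hB : ∀ i, IsProjectiveBundle q L (B i))
    (hdisj : ∀ i j, i ≠ j → Disjoint (B i) (B j)) :
    let H : Matrix P ({m // m ∈ L} ⊕ ((i : Fin t) × {o // o ∈ B i})) (ZMod 2) :=
      Matrix.of fun p c =>
        Sum.elim (fun m : {m // m ∈ L} => if p ∈ m.1 then (1 : ZMod 2) else 0)
          (fun io : (i : Fin t) × {o // o ∈ B i} => if p ∈ io.2.1 then 1 else 0) c
    H.rank = q ^ 2 + q ∧
    Module.finrank (ZMod 2) ↥(LinearMap.ker H.mulVecLin) = t * (q ^ 2 + q + 1) + 1 :=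
  statement_18_general q hodd P L hL t B hB
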